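/- arXiv:2104.00471 — 2 statements merged into one kernel-verified Lean document; each statement's English description precedes it below -/
import Mathlib

section
/- Let 0 < p < ∞ and 0 < q < ∞. Then ℓ_{p,q} has absolutely continuous norm: for every u ∈ ℓ_{p,q}, the tails u_n := (0,...,0, u(n+1), u(n+2), ...) satisfy ‖u_n‖_{p,q} → 0 as n → ∞. -/
open Filter MeasureTheory Set
open scoped ENNReal NNReal Topology

/-- Non-increasing rearrangement of a sequence (0-indexed: `rearr u j` is the
`(j+1)`-th largest value of `|u|`). -/
noncomputable def rearr (u : ℕ → ℝ) (j : ℕ) : ℝ :=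
  sInf {t : ℝ | 0 ≤ t ∧ Set.encard {i : ℕ | t < |u i|} ≤ (j : ℕ∞)}

/-- Lorentz sequence quasi-norm `‖u‖_{p,q}` for `q < ∞`. -/
noncomputable def lorentzNorm (p q : ℝ) (u : ℕ → ℝ) : ℝ≥0∞ :=
  (∑' j : ℕ, ENNReal.ofReal (((j : ℝ) + 1) ^ (q / p - 1) * rearr u j ^ q)) ^ (1 / q)

/-- Lorentz sequence quasi-norm `‖u‖_{p,∞}`. -/
noncomputable def lorentzNormInf (p : ℝ) (u : ℕ → ℝ) : ℝ≥0∞ :=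
  ⨆ j : ℕ, ENNReal.ofReal (((j : ℝ) + 1) ^ (1 / p) * rearr u j)

/-- Lorentz sequence quasi-norm with extended second index. -/
noncomputable def lorentzNormE (p : ℝ) (q : ℝ≥0∞) (u : ℕ → ℝ) : ℝ≥0∞ :=
  if q = ⊤ then lorentzNormInf p u else lorentzNorm p q.toReal u

/-! A finite norm forces `u → 0`: otherwise `rearr u` stays above some `c > 0` and the
weights `(j + 1) ^ (q / p - 1)` are not summable. Hence for each `j` the rearrangement of the
tails tends to `0`, while it is dominated by `rearr u j`, and dominated convergence for the
series defining the norm concludes. If `|u|` is unbounded, every level set is infinite, so all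
rearrangements of `u` and its tails vanish and so do their norms. -/

theorem ENNReal.tendsto_tsum_of_dominated_convergence {α : Type*} {F : ℕ → α → ℝ≥0∞}
    {f bound : α → ℝ≥0∞} (h_bound : ∀ n a, F n a ≤ bound a) (h_fin : ∑' a, bound a ≠ ∞)
    (h_lim : ∀ a, Tendsto (fun n => F n a) atTop (𝓝 (f a))) :
    Tendsto (fun n => ∑' a, F n a) atTop (𝓝 (∑' a, f a)) := by
  let : MeasurableSpace α := ⊤
  simp only [← lintegral_count' measurable_from_top] at h_fin ⊢
  exact tendsto_lintegral_of_dominated_convergence bound (fun _ => measurable_from_top)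
    (fun n => ae_of_all _ (h_bound n)) h_fin (ae_of_all _ h_lim)

theorem not_summable_add_one_rpow {r : ℝ} (hr : -1 ≤ r) :
    ¬Summable fun j : ℕ => ((j : ℝ) + 1) ^ r := fun h => by
  have := Real.summable_nat_rpow.1 ((summable_nat_add_iff 1).1 (by simpa using h))
  linarith

section Rearrangement

variable {u v : ℕ → ℝ} {j : ℕ} {t : ℝ}

theorem rearr_nonneg (u : ℕ → ℝ) (j : ℕ) : 0 ≤ rearr u j :=
  Real.sInf_nonneg fun _ ht => ht.1

theorem rearr_le (ht : 0 ≤ t) (h : {i | t < |u i|}.encard ≤ j) : rearr u j ≤ t :=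
  csInf_le ⟨0, fun _ hs => hs.1⟩ ⟨ht, h⟩

theorem rearr_le_of_forall_abs_le (ht : 0 ≤ t) (h : ∀ i, |u i| ≤ t) : rearr u j ≤ t :=
  rearr_le ht <| by
    rw [show {i | t < |u i|} = ∅ from eq_empty_of_forall_notMem fun i hi => (h i).not_gt hi,
      encard_empty]
    exact bot_le

theorem le_rearr (hb : BddAbove (range fun i => |u i|))
    (h : ∀ s, 0 ≤ s → {i | s < |u i|}.encard ≤ j → t ≤ s) : t ≤ rearr u j := by
  obtain ⟨M, hM⟩ := hb
  have hM' : ∀ i, |u i| ≤ M := fun i => hM ⟨i, rfl⟩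
  refine le_csInf ⟨M, (abs_nonneg _).trans (hM' 0), ?_⟩ fun s hs => h s hs.1 hs.2
  rw [show {i | M < |u i|} = ∅ from eq_empty_of_forall_notMem fun i hi => (hM' i).not_gt hi,
    encard_empty]
  exact bot_le

theorem rearr_mono (hb : BddAbove (range fun i => |u i|)) (h : ∀ i, |v i| ≤ |u i|) :
    rearr v j ≤ rearr u j :=
  le_rearr hb fun _ hs hsj =>
    rearr_le hs ((encard_mono fun i (hi : _ < |v i|) => hi.trans_le (h i)).trans hsj)

theorem le_rearr_of_infinite (hb : BddAbove (range fun i => |u i|))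
    (h : {i | t ≤ |u i|}.Infinite) : t ≤ rearr u j :=
  le_rearr hb fun s _ hsj => by
    by_contra! hst
    have : {i | s < |u i|}.Infinite := h.mono fun i (hi : t ≤ |u i|) => hst.trans_le hi
    simp [this.encard_eq] at hsj

theorem bddAbove_of_finite_levelSet (h : {i | t < |u i|}.Finite) :
    BddAbove (range fun i => |u i|) := by
  obtain ⟨M, hM⟩ := (h.image fun i => |u i|).bddAbove
  refine ⟨max t M, ?_⟩
  rintro _ ⟨i, rfl⟩
  by_cases hi : t < |u i|
  · exact le_max_of_le_right (hM (mem_image_of_mem _ hi))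
  · exact le_max_of_le_left (not_lt.1 hi)

theorem rearr_eq_zero_of_not_bddAbove (hb : ¬BddAbove (range fun i => |u i|)) (j : ℕ) :
    rearr u j = 0 := by
  suffices {t : ℝ | 0 ≤ t ∧ {i | t < |u i|}.encard ≤ j} = ∅ by
    rw [rearr, this, Real.sInf_empty]
  refine eq_empty_of_forall_notMem fun t ⟨_, htj⟩ =>
    hb (bddAbove_of_finite_levelSet (t := t) ?_)
  exact Set.encard_lt_top_iff.1 (htj.trans_lt (by simp))

end Rearrangement

section LorentzNorm

variable {p q : ℝ} {u : ℕ → ℝ}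

theorem lorentzNorm_eq_zero_of_not_bddAbove (hq : 0 < q)
    (hb : ¬BddAbove (range fun i => |u i|)) : lorentzNorm p q u = 0 := by
  simp [lorentzNorm, rearr_eq_zero_of_not_bddAbove hb, Real.zero_rpow hq.ne', hq]

theorem lorentzNorm_eq_top_of_le_rearr (hp : 0 < p) (hq : 0 < q) {c : ℝ} (hc : 0 < c)
    (h : ∀ j, c ≤ rearr u j) : lorentzNorm p q u = ⊤ := by
  have hr : -1 ≤ q / p - 1 := by linarith [div_pos hq hp]
  have hdiv : ∑' j : ℕ, ENNReal.ofReal (((j : ℝ) + 1) ^ (q / p - 1) * c ^ q) = ∞ := by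
    by_contra hfin
    refine not_summable_add_one_rpow hr <|
      (summable_mul_right_iff (Real.rpow_pos_of_pos hc q).ne').1 ?_
    exact (ENNReal.summable_toReal hfin).congr fun j => ENNReal.toReal_ofReal (by positivity)
  have hle : ∑' j : ℕ, ENNReal.ofReal (((j : ℝ) + 1) ^ (q / p - 1) * c ^ q) ≤
      ∑' j : ℕ, ENNReal.ofReal (((j : ℝ) + 1) ^ (q / p - 1) * rearr u j ^ q) :=
    ENNReal.tsum_le_tsum fun j => ENNReal.ofReal_le_ofReal <| mul_le_mul_of_nonneg_left
      (Real.rpow_le_rpow hc.le (h j) hq.le) (by positivity)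
  rw [lorentzNorm, top_unique (hdiv.symm.trans_le hle),
    ENNReal.top_rpow_of_pos (one_div_pos.2 hq)]

theorem tendsto_zero_of_lorentzNorm_ne_top (hp : 0 < p) (hq : 0 < q)
    (hb : BddAbove (range fun i => |u i|)) (hu : lorentzNorm p q u ≠ ⊤) :
    Tendsto u atTop (𝓝 0) := by
  rw [← Nat.cofinite_eq_atTop, Metric.tendsto_nhds]
  intro ε hε
  rw [eventually_cofinite]
  by_contra hinf
  refine hu (lorentzNorm_eq_top_of_le_rearr hp hq hε fun j => le_rearr_of_infinite hb ?_)
  simpa [Real.dist_0_eq_abs] using hinf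

theorem tendsto_lorentzNorm_zero_of_rearr_le (hq : 0 < q) (hu : lorentzNorm p q u ≠ ⊤)
    {v : ℕ → ℕ → ℝ} (hle : ∀ n j, rearr (v n) j ≤ rearr u j)
    (hlim : ∀ j, Tendsto (fun n => rearr (v n) j) atTop (𝓝 0)) :
    Tendsto (fun n => lorentzNorm p q (v n)) atTop (𝓝 0) := by
  have hq' : 0 < 1 / q := one_div_pos.2 hq
  have hsum : Tendsto (fun n => ∑' j : ℕ,
      ENNReal.ofReal (((j : ℝ) + 1) ^ (q / p - 1) * rearr (v n) j ^ q)) atTop (𝓝 0) := by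
    have hfin : ∑' j : ℕ, ENNReal.ofReal (((j : ℝ) + 1) ^ (q / p - 1) * rearr u j ^ q) ≠ ∞ :=
      fun h => hu (by rw [lorentzNorm, h, ENNReal.top_rpow_of_pos hq'])
    simpa using ENNReal.tendsto_tsum_of_dominated_convergence (f := 0)
      (F := fun n (j : ℕ) => ENNReal.ofReal (((j : ℝ) + 1) ^ (q / p - 1) * rearr (v n) j ^ q))
      (fun n j => ENNReal.ofReal_le_ofReal <| mul_le_mul_of_nonneg_left
        (Real.rpow_le_rpow (rearr_nonneg _ _) (hle n j) hq.le) (by positivity)) hfin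
      fun j => by
        simpa [Function.comp_def, Real.zero_rpow hq.ne'] using
          (ENNReal.continuous_ofReal.tendsto _).comp
            (((hlim j).rpow_const (Or.inr hq.le)).const_mul (((j : ℝ) + 1) ^ (q / p - 1)))
  have := ((ENNReal.continuous_rpow_const (y := 1 / q)).tendsto 0).comp hsum
  rwa [ENNReal.zero_rpow_of_pos hq'] at this

end LorentzNorm

section Tail

def seqTail (n : ℕ) (u : ℕ → ℝ) : ℕ → ℝ := fun i => if i < n then 0 else u i

variable {u : ℕ → ℝ}

theorem abs_seqTail_le (n : ℕ) (u : ℕ → ℝ) (i : ℕ) : |seqTail n u i| ≤ |u i| := by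
  by_cases h : i < n <;> simp [seqTail, h]

theorem not_bddAbove_seqTail (hb : ¬BddAbove (range fun i => |u i|)) (n : ℕ) :
    ¬BddAbove (range fun i => |seqTail n u i|) := by
  rintro ⟨M, hM⟩
  obtain ⟨M', hM'⟩ := ((finite_Iio n).image fun i => |u i|).bddAbove
  refine hb ⟨max M M', ?_⟩
  rintro _ ⟨i, rfl⟩
  by_cases h : i < n
  · exact le_max_of_le_right (hM' (mem_image_of_mem _ h))
  · exact le_max_of_le_left (by simpa [seqTail, h] using hM ⟨i, rfl⟩)

theorem tendsto_rearr_seqTail (hu : Tendsto u atTop (𝓝 0)) (j : ℕ) :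
    Tendsto (fun n => rearr (seqTail n u) j) atTop (𝓝 0) := by
  refine tendsto_order.2 ⟨fun a ha => Eventually.of_forall fun n =>
    ha.trans_le (rearr_nonneg _ _), fun ε hε => ?_⟩
  obtain ⟨N, hN⟩ := Metric.tendsto_atTop.1 hu (ε / 2) (half_pos hε)
  refine eventually_atTop.2 ⟨N, fun n hn => ?_⟩
  refine (rearr_le_of_forall_abs_le (half_pos hε).le fun i => ?_).trans_lt (half_lt_self hε)
  by_cases h : i < n
  · simp [seqTail, h, (half_pos hε).le]
  · simpa [seqTail, h, Real.dist_0_eq_abs] using (hN i (by omega)).le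

end Tail

/-- `ℓ_{p,q}` (with `0 < p,q < ∞`) has absolutely continuous norm: the tails of
any element tend to zero in the quasi-norm. -/
theorem lorentz_abs_continuous (p q : ℝ) (hp : 0 < p) (hq : 0 < q)
    (u : ℕ → ℝ) (hu : lorentzNorm p q u ≠ ⊤) :
    Filter.Tendsto (fun n : ℕ => lorentzNorm p q (fun i => if i < n then 0 else u i))
      Filter.atTop (nhds 0) := by
  change Tendsto (fun n => lorentzNorm p q (seqTail n u)) atTop (𝓝 0)
  by_cases hb : BddAbove (range fun i => |u i|)
  · exact tendsto_lorentzNorm_zero_of_rearr_le hq hu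
      (fun n _ => rearr_mono hb (abs_seqTail_le n u))
      (tendsto_rearr_seqTail (tendsto_zero_of_lorentzNorm_ne_top hp hq hb hu))
  · simp only [lorentzNorm_eq_zero_of_not_bddAbove hq (not_bddAbove_seqTail hb _)]
    exact tendsto_const_nhds
end

section
/- Khintchine's inequality for Lorentz spaces: let 0 < p < ∞ and 0 < q ≤ ∞. There exists a constant C_{p,q} such that for all N ∈ ℕ and all a = (a_1, ..., a_N) ∈ ℝ^N, C_{p,q}^{−1} ‖∑_{i=1}^N a_i R_i‖_{L^{p,q}(0,1)} ≤ (∑_{i=1}^N a_i²)^{1/2} ≤ C_{p,q} ‖∑_{i=1}^N a_i R_i‖_{L^{p,q}(0,1)}. -/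
open Filter MeasureTheory Set Real
open scoped ENNReal NNReal Topology

/-- Non-increasing rearrangement of a function on `(0,1)`. -/
noncomputable def frearr (f : ℝ → ℝ) (t : ℝ) : ℝ :=
  sInf {l : ℝ | 0 ≤ l ∧
    MeasureTheory.volume {x ∈ Set.Ioo (0 : ℝ) 1 | l < |f x|} ≤ ENNReal.ofReal t}

/-- Lorentz function quasi-norm `‖f‖_{L^{p,q}(0,1)}` for `q < ∞`. -/
noncomputable def lorentzFNorm (p q : ℝ) (f : ℝ → ℝ) : ℝ≥0∞ :=
  (∫⁻ t in Set.Ioo (0 : ℝ) 1, ENNReal.ofReal (t ^ (q / p - 1) * frearr f t ^ q)) ^ (1 / q)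

/-- Lorentz function quasi-norm `‖f‖_{L^{p,∞}(0,1)}`. -/
noncomputable def lorentzFNormInf (p : ℝ) (f : ℝ → ℝ) : ℝ≥0∞ :=
  ⨆ t : Set.Ioo (0 : ℝ) 1, ENNReal.ofReal ((t : ℝ) ^ (1 / p) * frearr f (t : ℝ))

/-- The step function on `(0,1)` associated with `a ∈ ℝ^{2^n}` (0-indexed),
constant equal to `a i` on `(i/2^n, (i+1)/2^n)`. -/
noncomputable def stepFun (n : ℕ) (a : ℕ → ℝ) : ℝ → ℝ :=
  fun t => ∑ i ∈ Finset.range (2 ^ n),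
    a i * Set.indicator (Set.Ioo ((i : ℝ) / 2 ^ n) (((i : ℝ) + 1) / 2 ^ n)) 1 t

/-- Lorentz function quasi-norm with extended second index. -/
noncomputable def lorentzFNormE (p : ℝ) (q : ℝ≥0∞) (f : ℝ → ℝ) : ℝ≥0∞ :=
  if q = ⊤ then lorentzFNormInf p f else lorentzFNorm p q.toReal f

/-- The Rademacher functions `R_n(t) = sign (sin (2^n π t))`. -/
noncomputable def radem (n : ℕ) (t : ℝ) : ℝ :=
  Real.sign (Real.sin (2 ^ n * Real.pi * t))

/-!
On each dyadic interval of length `2⁻ᴺ` the Rademacher sum `f = ∑ aᵢ Rᵢ` is a constant signed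
sum `∑ ± aᵢ`, and each of the `2ᴺ` sign patterns occurs exactly once, so distribution estimates
for `f` are counting estimates over sign patterns. Let `S = ∑ aᵢ²`. The identity
`∑ cosh (u ∑ ± aᵢ) = 2ᴺ ∏ cosh (u aᵢ) ≤ 2ᴺ exp (u² S / 2)` gives the subgaussian tail
`|{|f| > l}| ≤ 2 exp (-l² / 2S)`, hence `f*(t) ≤ √(2 S log (2 / t)) ≲ √S t^(-1/(2p))`,
and the `L^{p,q}` norm of that profile is `≲ √S`. Conversely, the second and fourth moments
of the signed sums (`2ᴺ S` and at most `3 · 2ᴺ S²`) and Paley–Zygmund give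
`|{|f| > √S / 2}| ≥ 3 / 16`, so `f* ≥ √S / 2` on `(0, 3 / 16)` and the `L^{p,q}` norm is `≳ √S`.
-/

open Finset

lemma sum_range_two_mul {M : Type*} [AddCommMonoid M] (g : ℕ → M) (n : ℕ) :
    ∑ k ∈ range (2 * n), g k = ∑ j ∈ range n, (g (2 * j) + g (2 * j + 1)) := by
  induction n with
  | zero => simp
  | succ n ih => rw [show 2 * (n + 1) = 2 * n + 1 + 1 by ring, sum_range_succ, sum_range_succ,
      sum_range_succ, ih, add_assoc]

/-- A counting form of the Paley–Zygmund inequality. -/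
lemma sq_sub_card_mul_le_card_filter_mul_sum_sq {ι : Type*} (s : Finset ι) (y : ι → ℝ) {c : ℝ}
    (hc : 0 ≤ c) (hcs : #s * c ≤ ∑ i ∈ s, y i) :
    (∑ i ∈ s, y i - #s * c) ^ 2 ≤ #{i ∈ s | c < y i} * ∑ i ∈ s, y i ^ 2 := by
  have h_small : ∑ i ∈ s with ¬c < y i, y i ≤ #s * c :=
    calc ∑ i ∈ s with ¬c < y i, y i ≤ ∑ i ∈ s with ¬c < y i, c :=
          sum_le_sum fun i hi => not_lt.1 (mem_filter.1 hi).2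
      _ = #{i ∈ s | ¬c < y i} * c := by rw [sum_const, nsmul_eq_mul]
      _ ≤ #s * c := by gcongr; exact filter_subset _ _
  have h_large : ∑ i ∈ s, y i - #s * c ≤ ∑ i ∈ s with c < y i, y i := by
    linarith [sum_filter_add_sum_filter_not s (fun i => c < y i) y]
  calc (∑ i ∈ s, y i - #s * c) ^ 2 ≤ (∑ i ∈ s with c < y i, y i) ^ 2 :=
        pow_le_pow_left₀ (sub_nonneg.2 hcs) h_large 2
    _ ≤ #{i ∈ s | c < y i} * ∑ i ∈ s with c < y i, y i ^ 2 := sq_sum_le_card_mul_sum_sq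
    _ ≤ #{i ∈ s | c < y i} * ∑ i ∈ s, y i ^ 2 := by
        gcongr
        exact filter_subset _ _

lemma frearr_nonneg (f : ℝ → ℝ) (t : ℝ) : 0 ≤ frearr f t :=
  Real.sInf_nonneg fun _ hl => hl.1

lemma frearr_le_of_volume_le {f : ℝ → ℝ} {t l : ℝ} (hl : 0 ≤ l)
    (h : volume {x ∈ Ioo (0 : ℝ) 1 | l < |f x|} ≤ ENNReal.ofReal t) : frearr f t ≤ l :=
  csInf_le ⟨0, fun _ hl => hl.1⟩ ⟨hl, h⟩

lemma le_frearr_of_lt_volume {f : ℝ → ℝ} {t L M : ℝ} (hf : ∀ x, |f x| ≤ M)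
    (h : ENNReal.ofReal t < volume {x ∈ Ioo (0 : ℝ) 1 | L < |f x|}) : L ≤ frearr f t := by
  refine le_csInf ⟨max M 0, le_max_right _ _, ?_⟩ fun l hl => ?_
  · have : {x ∈ Ioo (0 : ℝ) 1 | max M 0 < |f x|} = ∅ :=
      eq_empty_of_forall_notMem fun x hx => ((hf x).trans (le_max_left M 0)).not_gt hx.2
    rw [this, measure_empty]
    exact zero_le
  · by_contra! hlL
    have h_sub : {x ∈ Ioo (0 : ℝ) 1 | L < |f x|} ⊆ {x ∈ Ioo (0 : ℝ) 1 | l < |f x|} :=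
      fun x hx => ⟨hx.1, hlL.trans hx.2⟩
    exact h.not_ge ((measure_mono h_sub).trans hl.2)

lemma lintegral_Ioo_zero_rpow_sub_one {α c : ℝ} (hα : 0 < α) (hc : 0 ≤ c) :
    ∫⁻ t in Ioo 0 c, ENNReal.ofReal (t ^ (α - 1)) = ENNReal.ofReal (c ^ α / α) := by
  have h_int : IntegrableOn (fun t : ℝ => t ^ (α - 1)) (Ioo 0 c) :=
    (intervalIntegral.intervalIntegrable_rpow' (by linarith)).1.mono_set Ioo_subset_Ioc_self
  have h_nonneg : 0 ≤ᵐ[volume.restrict (Ioo 0 c)] fun t : ℝ => t ^ (α - 1) := by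
    filter_upwards [ae_restrict_mem measurableSet_Ioo] with t ht using rpow_nonneg ht.1.le _
  rw [← ofReal_integral_eq_lintegral_ofReal h_int h_nonneg, ← integral_Ioc_eq_integral_Ioo,
    ← intervalIntegral.integral_of_le hc, integral_rpow (Or.inl (by linarith)), sub_add_cancel,
    zero_rpow hα.ne', sub_zero]

section lorentzNorm

variable {p γ B L τ : ℝ} {f : ℝ → ℝ}

lemma lorentzFNormInf_le_of_frearr_le (hγ : γ < p⁻¹) (hB : 0 ≤ B)
    (hf : ∀ t ∈ Ioo (0 : ℝ) 1, frearr f t ≤ B * t ^ (-γ)) :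
    lorentzFNormInf p f ≤ ENNReal.ofReal B := by
  refine iSup_le fun ⟨t, ht⟩ => ENNReal.ofReal_le_ofReal ?_
  calc t ^ (1 / p) * frearr f t ≤ t ^ (1 / p) * (B * t ^ (-γ)) :=
        mul_le_mul_of_nonneg_left (hf t ht) (rpow_nonneg ht.1.le _)
    _ = B * t ^ (p⁻¹ - γ) := by rw [rpow_sub ht.1, rpow_neg ht.1.le, one_div]; ring
    _ ≤ B := mul_le_of_le_one_right hB (rpow_le_one ht.1.le ht.2.le (by linarith))

lemma lorentzFNorm_le_of_frearr_le {r : ℝ} (hr : 0 < r) (hγ : γ < p⁻¹) (hB : 0 ≤ B)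
    (hf : ∀ t ∈ Ioo (0 : ℝ) 1, frearr f t ≤ B * t ^ (-γ)) :
    lorentzFNorm p r f ≤ ENNReal.ofReal ((r * (p⁻¹ - γ))⁻¹ ^ r⁻¹ * B) := by
  set β := r * (p⁻¹ - γ)
  have hβ : 0 < β := mul_pos hr (sub_pos.2 hγ)
  have h_integrand : ∀ t ∈ Ioo (0 : ℝ) 1,
      t ^ (r / p - 1) * frearr f t ^ r ≤ B ^ r * t ^ (β - 1) := fun t ht =>
    calc t ^ (r / p - 1) * frearr f t ^ r ≤ t ^ (r / p - 1) * (B * t ^ (-γ)) ^ r :=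
          mul_le_mul_of_nonneg_left (rpow_le_rpow (frearr_nonneg f t) (hf t ht) hr.le)
            (rpow_nonneg ht.1.le _)
      _ = B ^ r * t ^ (β - 1) := by
          rw [mul_rpow hB (rpow_nonneg ht.1.le _), ← rpow_mul ht.1.le, mul_left_comm,
            ← rpow_add ht.1]
          congr 2
          simp only [β]
          ring
  have h_int : ∫⁻ t in Ioo (0 : ℝ) 1, ENNReal.ofReal (t ^ (r / p - 1) * frearr f t ^ r) ≤
      ENNReal.ofReal (B ^ r * β⁻¹) :=
    calc _ ≤ ∫⁻ t in Ioo (0 : ℝ) 1, ENNReal.ofReal (B ^ r) * ENNReal.ofReal (t ^ (β - 1)) :=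
          setLIntegral_mono' measurableSet_Ioo fun t ht => by
            rw [← ENNReal.ofReal_mul (by positivity)]
            exact ENNReal.ofReal_le_ofReal (h_integrand t ht)
      _ = ENNReal.ofReal (B ^ r * β⁻¹) := by
          rw [lintegral_const_mul' _ _ ENNReal.ofReal_ne_top,
            lintegral_Ioo_zero_rpow_sub_one hβ zero_le_one, one_rpow, one_div,
            ENNReal.ofReal_mul (by positivity)]
  calc lorentzFNorm p r f ≤ ENNReal.ofReal (B ^ r * β⁻¹) ^ (1 / r) := by
        rw [lorentzFNorm]; gcongr
    _ = ENNReal.ofReal (β⁻¹ ^ r⁻¹ * B) := by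
        rw [ENNReal.ofReal_rpow_of_nonneg (by positivity) (by positivity),
          mul_rpow (by positivity) (by positivity), ← rpow_mul hB, mul_one_div_cancel hr.ne',
          rpow_one, one_div, mul_comm]

lemma ofReal_mul_le_lorentzFNormInf_of_le_frearr (hτ : 0 < τ) (hτ1 : τ ≤ 1)
    (hf : ∀ t ∈ Ioo 0 τ, L ≤ frearr f t) :
    ENNReal.ofReal ((τ / 2) ^ (1 / p) * L) ≤ lorentzFNormInf p f := by
  refine le_trans ?_ (le_iSup _ (⟨τ / 2, half_pos hτ, by linarith⟩ : Ioo (0 : ℝ) 1))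
  exact ENNReal.ofReal_le_ofReal
    (mul_le_mul_of_nonneg_left (hf (τ / 2) ⟨half_pos hτ, half_lt_self hτ⟩) (by positivity))

lemma ofReal_mul_le_lorentzFNorm_of_le_frearr {r : ℝ} (hp : 0 < p) (hr : 0 < r) (hτ : 0 < τ)
    (hτ1 : τ ≤ 1) (hL : 0 ≤ L) (hf : ∀ t ∈ Ioo 0 τ, L ≤ frearr f t) :
    ENNReal.ofReal ((τ ^ (r / p) / (r / p)) ^ r⁻¹ * L) ≤ lorentzFNorm p r f := by
  have hα : 0 < r / p := div_pos hr hp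
  have h_int : ENNReal.ofReal (L ^ r * (τ ^ (r / p) / (r / p))) ≤
      ∫⁻ t in Ioo (0 : ℝ) 1, ENNReal.ofReal (t ^ (r / p - 1) * frearr f t ^ r) :=
    calc _ = ∫⁻ t in Ioo (0 : ℝ) τ, ENNReal.ofReal (L ^ r) * ENNReal.ofReal (t ^ (r / p - 1)) := by
          rw [lintegral_const_mul' _ _ ENNReal.ofReal_ne_top,
            lintegral_Ioo_zero_rpow_sub_one hα hτ.le, ENNReal.ofReal_mul (by positivity)]
      _ ≤ ∫⁻ t in Ioo (0 : ℝ) τ, ENNReal.ofReal (t ^ (r / p - 1) * frearr f t ^ r) :=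
          setLIntegral_mono' measurableSet_Ioo fun t ht => by
            rw [← ENNReal.ofReal_mul (by positivity), mul_comm]
            exact ENNReal.ofReal_le_ofReal (mul_le_mul_of_nonneg_left
              (rpow_le_rpow hL (hf t ht) hr.le) (rpow_nonneg ht.1.le _))
      _ ≤ _ := lintegral_mono_set (Ioo_subset_Ioo_right hτ1)
  calc ENNReal.ofReal ((τ ^ (r / p) / (r / p)) ^ r⁻¹ * L)
      = ENNReal.ofReal (L ^ r * (τ ^ (r / p) / (r / p))) ^ (1 / r) := by
        rw [ENNReal.ofReal_rpow_of_nonneg (by positivity) (by positivity),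
          mul_rpow (by positivity) (by positivity), ← rpow_mul hL, mul_one_div_cancel hr.ne',
          rpow_one, one_div, mul_comm]
    _ ≤ lorentzFNorm p r f := by rw [lorentzFNorm]; gcongr

variable {q : ℝ≥0∞}

lemma exists_lorentzFNormE_le_of_frearr_le (hq : 0 < q) (hγ : γ < p⁻¹) :
    ∃ C, ∀ (f : ℝ → ℝ) (B : ℝ), 0 ≤ B → (∀ t ∈ Ioo (0 : ℝ) 1, frearr f t ≤ B * t ^ (-γ)) →
      lorentzFNormE p q f ≤ ENNReal.ofReal (C * B) := by
  rcases eq_or_ne q ⊤ with rfl | hq_top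
  · refine ⟨1, fun f B hB hf => ?_⟩
    rw [lorentzFNormE, if_pos rfl, one_mul]
    exact lorentzFNormInf_le_of_frearr_le hγ hB hf
  · refine ⟨(q.toReal * (p⁻¹ - γ))⁻¹ ^ q.toReal⁻¹, fun f B hB hf => ?_⟩
    rw [lorentzFNormE, if_neg hq_top]
    exact lorentzFNorm_le_of_frearr_le (ENNReal.toReal_pos hq.ne' hq_top) hγ hB hf

lemma exists_le_lorentzFNormE_of_le_frearr (hp : 0 < p) (hq : 0 < q) (hτ : 0 < τ) (hτ1 : τ ≤ 1) :
    ∃ c > 0, ∀ (f : ℝ → ℝ) (L : ℝ), 0 ≤ L → (∀ t ∈ Ioo 0 τ, L ≤ frearr f t) →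
      ENNReal.ofReal (c * L) ≤ lorentzFNormE p q f := by
  rcases eq_or_ne q ⊤ with rfl | hq_top
  · refine ⟨(τ / 2) ^ (1 / p), by positivity, fun f L _ hf => ?_⟩
    rw [lorentzFNormE, if_pos rfl]
    exact ofReal_mul_le_lorentzFNormInf_of_le_frearr hτ hτ1 hf
  · have hr : 0 < q.toReal := ENNReal.toReal_pos hq.ne' hq_top
    refine ⟨(τ ^ (q.toReal / p) / (q.toReal / p)) ^ q.toReal⁻¹, by positivity,
      fun f L hL hf => ?_⟩
    rw [lorentzFNormE, if_neg hq_top]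
    exact ofReal_mul_le_lorentzFNorm_of_le_frearr hp hr hτ hτ1 hL hf

end lorentzNorm

def dyadicInterval (N k : ℕ) : Set ℝ :=
  Ioo ((k : ℝ) / 2 ^ N) ((k + 1) / 2 ^ N)

section dyadicInterval

variable {N k : ℕ}

lemma dyadicInterval_subset_Ioo (hk : k < 2 ^ N) : dyadicInterval N k ⊆ Ioo 0 1 := by
  have hkN : (k : ℝ) + 1 ≤ 2 ^ N := by exact_mod_cast hk
  exact Ioo_subset_Ioo (by positivity) ((div_le_one (by positivity)).2 hkN)

lemma volume_dyadicInterval (N k : ℕ) :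
    volume (dyadicInterval N k) = ENNReal.ofReal (1 / 2 ^ N) := by
  rw [dyadicInterval, Real.volume_Ioo, ← sub_div, add_sub_cancel_left]

lemma pairwise_disjoint_dyadicInterval (N : ℕ) :
    Pairwise (Function.onFun Disjoint (dyadicInterval N)) := by
  have := Monotone.pairwise_disjoint_on_Ioo_succ (f := fun k : ℕ => (k : ℝ) / 2 ^ N)
    fun _ _ h => by simp only; gcongr
  unfold dyadicInterval
  simpa only [Order.succ_eq_add_one, Nat.cast_add, Nat.cast_one] using this

lemma exists_mem_dyadicInterval {x : ℝ} (hx : x ∈ Ioo (0 : ℝ) 1)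
    (hx_dyadic : x ∉ range fun j : ℕ => (j : ℝ) / 2 ^ N) : ∃ k < 2 ^ N, x ∈ dyadicInterval N k := by
  have h2N : (0 : ℝ) < 2 ^ N := by positivity
  set k := ⌊2 ^ N * x⌋₊
  have hk_lt : (k : ℝ) < 2 ^ N * x := (Nat.floor_le (by nlinarith [hx.1])).lt_of_ne fun h =>
    hx_dyadic ⟨k, by show (k : ℝ) / 2 ^ N = x; rw [show (k : ℝ) = 2 ^ N * x from h]; field_simp⟩
  have hk_gt : 2 ^ N * x < k + 1 := Nat.lt_floor_add_one _
  have hkN : (k : ℝ) < 2 ^ N := hk_lt.trans (by nlinarith [hx.2])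
  exact ⟨k, by exact_mod_cast hkN,
    by rw [div_lt_iff₀ h2N]; linarith, by rw [lt_div_iff₀ h2N]; linarith⟩

end dyadicInterval

lemma volume_setOf_of_eq_on_dyadicInterval {g : ℝ → ℝ} {c : ℕ → ℝ} {N : ℕ} (P : ℝ → Prop)
    [DecidablePred P] (hg : ∀ k < 2 ^ N, ∀ x ∈ dyadicInterval N k, g x = c k) :
    volume {x ∈ Ioo (0 : ℝ) 1 | P (g x)} =
      ENNReal.ofReal (#{k ∈ range (2 ^ N) | P (c k)} / 2 ^ N) := by
  set K := {k ∈ range (2 ^ N) | P (c k)}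
  have h_sub : ⋃ k ∈ K, dyadicInterval N k ⊆ {x ∈ Ioo (0 : ℝ) 1 | P (g x)} := by
    refine iUnion₂_subset fun k hk x hx => ?_
    obtain ⟨hk, hPk⟩ := mem_filter.1 hk
    exact ⟨dyadicInterval_subset_Ioo (mem_range.1 hk) hx, by rwa [hg k (mem_range.1 hk) x hx]⟩
  -- The remaining points of `(0, 1)` are dyadic rationals.
  have h_null : volume ({x ∈ Ioo (0 : ℝ) 1 | P (g x)} \ ⋃ k ∈ K, dyadicInterval N k) = 0 := by
    refine measure_mono_null (t := range fun j : ℕ => (j : ℝ) / 2 ^ N) ?_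
      ((countable_range _).measure_zero _)
    rintro x ⟨⟨hx, hPx⟩, hxU⟩
    by_contra hx_dyadic
    obtain ⟨k, hkN, hxk⟩ := exists_mem_dyadicInterval hx hx_dyadic
    exact hxU (mem_iUnion₂.2 ⟨k, mem_filter.2 ⟨mem_range.2 hkN, hg k hkN x hxk ▸ hPx⟩, hxk⟩)
  rw [← measure_eq_measure_of_null_sdiff h_sub h_null,
    measure_biUnion_finset ((pairwise_disjoint_dyadicInterval N).set_pairwise _)
      fun k _ => (measurableSet_Ioo : MeasurableSet (dyadicInterval N k)),
    sum_congr rfl fun k _ => volume_dyadicInterval N k, sum_const, nsmul_eq_mul,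
    ← ENNReal.ofReal_natCast, ← ENNReal.ofReal_mul (by positivity), mul_one_div]

def dyadicSum (a : ℕ → ℝ) (N k : ℕ) : ℝ :=
  ∑ i ∈ Icc 1 N, a i * (-1) ^ (k / 2 ^ (N - i))

section dyadicSum

variable (a : ℕ → ℝ)

lemma dyadicSum_two_mul_add (N j b : ℕ) (hb : b < 2) :
    dyadicSum a (N + 1) (2 * j + b) = dyadicSum a N j + a (N + 1) * (-1) ^ b := by
  rw [dyadicSum, sum_Icc_succ_top (by omega), Nat.sub_self, pow_zero, Nat.div_one, pow_add,
    pow_mul, neg_one_sq, one_pow, one_mul]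
  congr 1
  refine sum_congr rfl fun i hi => ?_
  rw [show N + 1 - i = N - i + 1 by simp at hi; omega, pow_succ', ← Nat.div_div_eq_div_mul,
    show (2 * j + b) / 2 = j by omega]

lemma sum_dyadicSum_succ (N : ℕ) (φ : ℝ → ℝ) :
    ∑ k ∈ range (2 ^ (N + 1)), φ (dyadicSum a (N + 1) k) =
      ∑ j ∈ range (2 ^ N), (φ (dyadicSum a N j + a (N + 1)) + φ (dyadicSum a N j - a (N + 1))) := by
  rw [pow_succ', sum_range_two_mul]
  refine sum_congr rfl fun j _ => ?_
  have h0 := dyadicSum_two_mul_add a N j 0 two_pos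
  have h1 := dyadicSum_two_mul_add a N j 1 one_lt_two
  rw [add_zero] at h0
  rw [h0, h1, sub_eq_add_neg]
  simp

lemma sum_dyadicSum_sq (N : ℕ) :
    ∑ k ∈ range (2 ^ N), dyadicSum a N k ^ 2 = 2 ^ N * ∑ i ∈ Icc 1 N, a i ^ 2 := by
  induction N with
  | zero => simp [dyadicSum]
  | succ N ih =>
    have parallelogram (x y : ℝ) : (x + y) ^ 2 + (x - y) ^ 2 = 2 * x ^ 2 + 2 * y ^ 2 := by ring
    simp only [sum_dyadicSum_succ a N (· ^ 2), parallelogram, sum_add_distrib, ← mul_sum, ih,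
      sum_const, card_range, nsmul_eq_mul, sum_Icc_succ_top (Nat.le_add_left 1 N)]
    push_cast
    ring

lemma sum_dyadicSum_pow_four_le (N : ℕ) :
    ∑ k ∈ range (2 ^ N), dyadicSum a N k ^ 4 ≤ 3 * 2 ^ N * (∑ i ∈ Icc 1 N, a i ^ 2) ^ 2 := by
  induction N with
  | zero => simp [dyadicSum]
  | succ N ih =>
    have expand (x y : ℝ) :
        (x + y) ^ 4 + (x - y) ^ 4 = 2 * x ^ 4 + 12 * y ^ 2 * x ^ 2 + 2 * y ^ 4 := by ring
    rw [sum_dyadicSum_succ a N (· ^ 4), pow_succ]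
    simp only [expand, sum_add_distrib, ← mul_sum, sum_dyadicSum_sq, sum_const, card_range,
      nsmul_eq_mul, sum_Icc_succ_top (Nat.le_add_left 1 N)]
    push_cast
    have hS : 0 ≤ ∑ i ∈ Icc 1 N, a i ^ 2 := sum_nonneg fun i _ => sq_nonneg _
    have h2N : (0 : ℝ) < 2 ^ N := by positivity
    nlinarith [mul_nonneg h2N.le (pow_nonneg (sq_nonneg (a (N + 1))) 2),
      mul_nonneg (mul_nonneg h2N.le hS) (sq_nonneg (a (N + 1)))]

lemma sum_cosh_mul_dyadicSum (N : ℕ) (u : ℝ) :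
    ∑ k ∈ range (2 ^ N), cosh (u * dyadicSum a N k) = 2 ^ N * ∏ i ∈ Icc 1 N, cosh (u * a i) := by
  induction N with
  | zero => simp [dyadicSum]
  | succ N ih =>
    have cosh_add_add_cosh_sub (x y : ℝ) :
        cosh (u * (x + y)) + cosh (u * (x - y)) = 2 * cosh (u * y) * cosh (u * x) := by
      rw [mul_add, mul_sub, cosh_add, cosh_sub]; ring
    simp only [sum_dyadicSum_succ a N (fun x => cosh (u * x)), cosh_add_add_cosh_sub, ← mul_sum, ih,
      prod_Icc_succ_top (Nat.le_add_left 1 N)]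
    ring
lemma card_half_sqrt_lt_abs_dyadicSum (N : ℕ) (hS : 0 < ∑ i ∈ Icc 1 N, a i ^ 2) :
    3 / 16 * 2 ^ N ≤
      (#{k ∈ range (2 ^ N) | √(∑ i ∈ Icc 1 N, a i ^ 2) / 2 < |dyadicSum a N k|} : ℝ) := by
  set S := ∑ i ∈ Icc 1 N, a i ^ 2
  have h_filter : {k ∈ range (2 ^ N) | √S / 2 < |dyadicSum a N k|} =
      {k ∈ range (2 ^ N) | S / 4 < dyadicSum a N k ^ 2} := by
    refine filter_congr fun k _ => ?_
    rw [← pow_lt_pow_iff_left₀ (by positivity) (abs_nonneg _) two_ne_zero, sq_abs, div_pow,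
      sq_sqrt hS.le]
    norm_num
  have hPZ := sq_sub_card_mul_le_card_filter_mul_sum_sq (range (2 ^ N))
    (fun k => dyadicSum a N k ^ 2) (c := S / 4) (by positivity)
    (by rw [sum_dyadicSum_sq, card_range]; push_cast; linarith [mul_pos (pow_pos two_pos N) hS])
  simp only [card_range, ← pow_mul, sum_dyadicSum_sq] at hPZ
  rw [h_filter]
  refine le_of_mul_le_mul_right ?_ (by positivity : (0 : ℝ) < 3 * 2 ^ N * S ^ 2)
  calc 3 / 16 * 2 ^ N * (3 * 2 ^ N * S ^ 2) = (2 ^ N * S - 2 ^ N * (S / 4)) ^ 2 := by ring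
    _ ≤ _ := by exact_mod_cast hPZ
    _ ≤ _ := by gcongr; exact sum_dyadicSum_pow_four_le a N

lemma sum_cosh_mul_dyadicSum_le (N : ℕ) (u : ℝ) :
    ∑ k ∈ range (2 ^ N), cosh (u * dyadicSum a N k) ≤
      2 ^ N * exp (u ^ 2 * (∑ i ∈ Icc 1 N, a i ^ 2) / 2) := by
  rw [sum_cosh_mul_dyadicSum]
  gcongr
  calc ∏ i ∈ Icc 1 N, cosh (u * a i) ≤ ∏ i ∈ Icc 1 N, exp ((u * a i) ^ 2 / 2) :=
        prod_le_prod (fun i _ => (cosh_pos _).le) fun i _ => cosh_le_exp_half_sq _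
    _ = exp (u ^ 2 * (∑ i ∈ Icc 1 N, a i ^ 2) / 2) := by
        rw [← exp_sum, mul_sum, sum_div]
        exact congrArg exp (sum_congr rfl fun i _ => by ring)

lemma card_lt_abs_dyadicSum_le (N : ℕ) {l : ℝ} (hl : 0 ≤ l) (hS : 0 < ∑ i ∈ Icc 1 N, a i ^ 2) :
    (#{k ∈ range (2 ^ N) | l < |dyadicSum a N k|} : ℝ) ≤
      2 * 2 ^ N * exp (-(l ^ 2 / (2 * ∑ i ∈ Icc 1 N, a i ^ 2))) := by
  set S := ∑ i ∈ Icc 1 N, a i ^ 2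
  -- Chernoff's bound, with the optimal parameter `u = l / S`.
  set u := l / S
  have h_exp_le_cosh : ∀ x, l < |x| → exp (u * l) ≤ 2 * cosh (u * x) := fun x hx =>
    calc exp (u * l) ≤ exp |u * x| := by
          rw [abs_mul, abs_of_nonneg (by positivity : 0 ≤ u)]; gcongr
      _ ≤ 2 * cosh (u * x) := by rw [cosh_eq]; linarith [exp_abs_le (u * x)]
  have h_markov : (#{k ∈ range (2 ^ N) | l < |dyadicSum a N k|} : ℝ) * exp (u * l) ≤
      2 * ∑ k ∈ range (2 ^ N), cosh (u * dyadicSum a N k) :=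
    calc _ = ∑ k ∈ range (2 ^ N) with l < |dyadicSum a N k|, exp (u * l) := by
          rw [sum_const, nsmul_eq_mul]
      _ ≤ ∑ k ∈ range (2 ^ N) with l < |dyadicSum a N k|, 2 * cosh (u * dyadicSum a N k) :=
          sum_le_sum fun k hk => h_exp_le_cosh _ (mem_filter.1 hk).2
      _ ≤ ∑ k ∈ range (2 ^ N), 2 * cosh (u * dyadicSum a N k) :=
          sum_le_sum_of_subset_of_nonneg (filter_subset _ _) fun _ _ _ => by positivity
      _ = _ := (mul_sum _ _ _).symm
  have h_exponent : exp (u ^ 2 * S / 2) = exp (-(l ^ 2 / (2 * S))) * exp (u * l) := by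
    rw [← exp_add]
    congr 1
    simp only [u]
    field_simp
    ring
  refine le_of_mul_le_mul_right ?_ (exp_pos (u * l))
  calc _ ≤ 2 * ∑ k ∈ range (2 ^ N), cosh (u * dyadicSum a N k) := h_markov
    _ ≤ 2 * (2 ^ N * exp (u ^ 2 * S / 2)) := by gcongr; exact sum_cosh_mul_dyadicSum_le a N u
    _ = _ := by rw [h_exponent]; ring

end dyadicSum

lemma sign_sin_pi_mul {x : ℝ} {m : ℕ} (hx : x ∈ Ioo (m : ℝ) (m + 1)) :
    Real.sign (sin (π * x)) = (-1) ^ m := by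
  have h_pos : 0 < sin ((x - m) * π) :=
    sin_pos_of_pos_of_lt_pi (mul_pos (sub_pos.2 hx.1) pi_pos)
      (mul_lt_of_lt_one_left pi_pos (by linarith [hx.2]))
  rw [show π * x = (x - m) * π + m * π by ring, sin_add_nat_mul_pi]
  rcases neg_one_pow_eq_or ℝ m with h | h <;> rw [h]
  · rw [one_mul, Real.sign_of_pos h_pos]
  · rw [neg_one_mul, Real.sign_neg, Real.sign_of_pos h_pos]

lemma radem_eq_neg_one_pow {i N k : ℕ} (hi : i ≤ N) {t : ℝ} (ht : t ∈ dyadicInterval N k) :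
    radem i t = (-1) ^ (k / 2 ^ (N - i)) := by
  set j := N - i
  set m := k / 2 ^ j
  have h2j : (0 : ℝ) < 2 ^ j := by positivity
  have hN : (2 : ℝ) ^ N = 2 ^ i * 2 ^ j := by rw [← pow_add, Nat.add_sub_cancel' hi]
  have hm_le : (m : ℝ) * 2 ^ j ≤ k := by exact_mod_cast Nat.div_mul_le_self k (2 ^ j)
  have hk_lt : (k : ℝ) + 1 ≤ (m + 1) * 2 ^ j := by
    have : k < m * 2 ^ j + 2 ^ j := Nat.lt_div_mul_add (pow_pos two_pos j)
    have : k + 1 ≤ (m + 1) * 2 ^ j := by rw [add_one_mul]; omega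
    exact_mod_cast this
  have hx : 2 ^ i * t ∈ Ioo (m : ℝ) (m + 1) := by
    obtain ⟨ht1, ht2⟩ := ht
    rw [hN, div_lt_iff₀ (by positivity)] at ht1
    rw [hN, lt_div_iff₀ (by positivity)] at ht2
    constructor <;> nlinarith
  rw [radem, ← sign_sin_pi_mul hx]
  ring_nf

lemma abs_radem_le_one (i : ℕ) (t : ℝ) : |radem i t| ≤ 1 := by
  rcases Real.sign_apply_eq (sin (2 ^ i * π * t)) with h | h | h <;> simp [radem, h]

noncomputable def rademacherSum (N : ℕ) (a : ℕ → ℝ) (t : ℝ) : ℝ :=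
  ∑ i ∈ Icc 1 N, a i * radem i t

section rademacherSum

variable (N : ℕ) (a : ℕ → ℝ)

lemma rademacherSum_eq_dyadicSum {k : ℕ} {t : ℝ} (ht : t ∈ dyadicInterval N k) :
    rademacherSum N a t = dyadicSum a N k :=
  sum_congr rfl fun i hi => by rw [radem_eq_neg_one_pow (mem_Icc.1 hi).2 ht]

lemma abs_rademacherSum_le (t : ℝ) : |rademacherSum N a t| ≤ ∑ i ∈ Icc 1 N, |a i| :=
  (abs_sum_le_sum_abs _ _).trans <| sum_le_sum fun i _ => by
    rw [abs_mul]
    exact mul_le_of_le_one_right (abs_nonneg _) (abs_radem_le_one i t)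

lemma volume_lt_abs_rademacherSum (l : ℝ) :
    volume {x ∈ Ioo (0 : ℝ) 1 | l < |rademacherSum N a x|} =
      ENNReal.ofReal (#{k ∈ range (2 ^ N) | l < |dyadicSum a N k|} / 2 ^ N) :=
  volume_setOf_of_eq_on_dyadicInterval (l < |·|) fun _ _ _ hx => rademacherSum_eq_dyadicSum N a hx

lemma half_sqrt_le_frearr_rademacherSum {t : ℝ} (ht : t ∈ Ioo (0 : ℝ) (3 / 16)) :
    √(∑ i ∈ Icc 1 N, a i ^ 2) / 2 ≤ frearr (rademacherSum N a) t := by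
  rcases (sum_nonneg fun i _ => sq_nonneg (a i) : 0 ≤ ∑ i ∈ Icc 1 N, a i ^ 2).eq_or_lt with hS | hS
  · rw [← hS, sqrt_zero, zero_div]
    exact frearr_nonneg _ _
  refine le_frearr_of_lt_volume (abs_rademacherSum_le N a) ?_
  rw [volume_lt_abs_rademacherSum, ENNReal.ofReal_lt_ofReal_iff_of_nonneg ht.1.le,
    lt_div_iff₀ (by positivity)]
  nlinarith [card_half_sqrt_lt_abs_dyadicSum a N hS, ht.2, pow_pos (two_pos : (0 : ℝ) < 2) N]

lemma rademacherSum_eq_zero (hS : ∑ i ∈ Icc 1 N, a i ^ 2 = 0) (t : ℝ) : rademacherSum N a t = 0 :=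
  sum_eq_zero fun i hi => by
    rw [pow_eq_zero_iff two_ne_zero |>.1
      ((sum_eq_zero_iff_of_nonneg fun i _ => sq_nonneg (a i)).1 hS i hi), zero_mul]

lemma frearr_rademacherSum_le_sqrt_log {t : ℝ} (ht0 : 0 < t) (ht : t ≤ 2) :
    frearr (rademacherSum N a) t ≤ √(2 * (∑ i ∈ Icc 1 N, a i ^ 2) * log (2 / t)) := by
  set S := ∑ i ∈ Icc 1 N, a i ^ 2
  have h_log : 0 ≤ log (2 / t) := log_nonneg (by rw [le_div_iff₀ ht0]; linarith)
  rcases (sum_nonneg fun i _ => sq_nonneg (a i) : 0 ≤ S).eq_or_lt with hS | hS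
  · have h_empty : {x ∈ Ioo (0 : ℝ) 1 | 0 < |rademacherSum N a x|} = ∅ :=
      eq_empty_of_forall_notMem fun x hx =>
        hx.2.ne' (by rw [rademacherSum_eq_zero N a hS.symm, abs_zero])
    rw [show S = 0 from hS.symm, mul_zero, zero_mul, sqrt_zero]
    exact frearr_le_of_volume_le le_rfl (by rw [h_empty, measure_empty]; exact zero_le)
  refine frearr_le_of_volume_le (sqrt_nonneg _) ?_
  rw [volume_lt_abs_rademacherSum]
  refine ENNReal.ofReal_le_ofReal ((div_le_iff₀ (by positivity)).2 ?_)
  calc _ ≤ 2 * 2 ^ N * exp (-(√(2 * S * log (2 / t)) ^ 2 / (2 * S))) :=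
        card_lt_abs_dyadicSum_le a N (sqrt_nonneg _) hS
    _ = t * 2 ^ N := by
        rw [sq_sqrt (by positivity), mul_div_cancel_left₀ _ (by positivity), exp_neg,
          exp_log (by positivity)]
        field_simp

lemma frearr_rademacherSum_le_rpow {ε t : ℝ} (hε : 0 < ε) (ht : t ∈ Ioo (0 : ℝ) 1) :
    frearr (rademacherSum N a) t ≤
      √(2 * 2 ^ ε / ε) * √(∑ i ∈ Icc 1 N, a i ^ 2) * t ^ (-(ε / 2)) := by
  set S := ∑ i ∈ Icc 1 N, a i ^ 2
  have hS : 0 ≤ S := sum_nonneg fun i _ => sq_nonneg (a i)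
  refine (frearr_rademacherSum_le_sqrt_log N a ht.1 (by linarith [ht.2])).trans ?_
  calc √(2 * S * log (2 / t)) ≤ √(2 * S * ((2 / t) ^ ε / ε)) := by
        gcongr
        exact log_le_rpow_div (div_pos two_pos ht.1).le hε
    _ = √(2 * 2 ^ ε / ε) * √S * t ^ (-(ε / 2)) := by
        rw [div_rpow zero_le_two ht.1.le, div_eq_mul_inv (2 ^ ε), ← rpow_neg ht.1.le,
          show 2 * S * (2 ^ ε * t ^ (-ε) / ε) = 2 * 2 ^ ε / ε * S * t ^ (-ε) by ring,
          sqrt_mul (by positivity), sqrt_mul (by positivity), sqrt_eq_rpow (t ^ (-ε)),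
          ← rpow_mul ht.1.le]
        ring_nf

end rademacherSum

section lorentz

variable {p : ℝ} {q : ℝ≥0∞}

lemma exists_lorentzFNormE_rademacherSum_le (hp : 0 < p) (hq : 0 < q) :
    ∃ A, ∀ N a, lorentzFNormE p q (rademacherSum N a) ≤
      ENNReal.ofReal (A * √(∑ i ∈ Icc 1 N, a i ^ 2)) := by
  obtain ⟨C, hC⟩ := exists_lorentzFNormE_le_of_frearr_le hq (half_lt_self (inv_pos.2 hp))
  refine ⟨C * √(2 * 2 ^ p⁻¹ / p⁻¹), fun N a => ?_⟩
  rw [mul_assoc]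
  exact hC _ _ (by positivity) fun t ht => frearr_rademacherSum_le_rpow N a (inv_pos.2 hp) ht

lemma exists_le_lorentzFNormE_rademacherSum (hp : 0 < p) (hq : 0 < q) :
    ∃ c > 0, ∀ N a, ENNReal.ofReal (c * √(∑ i ∈ Icc 1 N, a i ^ 2)) ≤
      lorentzFNormE p q (rademacherSum N a) := by
  obtain ⟨c, hc, hc_le⟩ := exists_le_lorentzFNormE_of_le_frearr hp hq
    (by norm_num : (0 : ℝ) < 3 / 16) (by norm_num)
  refine ⟨c / 2, by positivity, fun N a => ?_⟩
  rw [div_mul_comm, mul_comm]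
  exact hc_le _ _ (by positivity) fun t ht => half_sqrt_le_frearr_rademacherSum N a ht

end lorentz

/-- Khintchine's inequality for Lorentz spaces `L^{p,q}(0,1)`,
`0 < p < ∞`, `0 < q ≤ ∞`. -/
theorem khintchine_lorentz (p : ℝ) (q : ℝ≥0∞) (hp : 0 < p) (hq : 0 < q) :
    ∃ C : ℝ, 0 < C ∧ ∀ (N : ℕ) (a : ℕ → ℝ),
      ENNReal.ofReal C⁻¹ *
          lorentzFNormE p q (fun t => ∑ i ∈ Finset.Icc 1 N, a i * radem i t) ≤
        ENNReal.ofReal (Real.sqrt (∑ i ∈ Finset.Icc 1 N, a i ^ 2)) ∧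
      ENNReal.ofReal (Real.sqrt (∑ i ∈ Finset.Icc 1 N, a i ^ 2)) ≤
        ENNReal.ofReal C *
          lorentzFNormE p q (fun t => ∑ i ∈ Finset.Icc 1 N, a i * radem i t) := by
  obtain ⟨A, h_upper⟩ := exists_lorentzFNormE_rademacherSum_le hp hq
  obtain ⟨c, hc, h_lower⟩ := exists_le_lorentzFNormE_rademacherSum hp hq
  set C := max A c⁻¹
  have hC : 0 < C := lt_max_of_lt_right (inv_pos.2 hc)
  refine ⟨C, hC, fun N a => ⟨?_, ?_⟩⟩
  · calc ENNReal.ofReal C⁻¹ * lorentzFNormE p q (rademacherSum N a)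
        ≤ ENNReal.ofReal C⁻¹ * ENNReal.ofReal (A * √(∑ i ∈ Icc 1 N, a i ^ 2)) := by
          gcongr; exact h_upper N a
      _ ≤ ENNReal.ofReal (√(∑ i ∈ Icc 1 N, a i ^ 2)) := by
          rw [← ENNReal.ofReal_mul (by positivity), ← mul_assoc]
          exact ENNReal.ofReal_le_ofReal (mul_le_of_le_one_left (sqrt_nonneg _)
            (inv_mul_le_one_of_le₀ (le_max_left _ _) hC.le))
  · calc ENNReal.ofReal (√(∑ i ∈ Icc 1 N, a i ^ 2))
        ≤ ENNReal.ofReal C * ENNReal.ofReal (c * √(∑ i ∈ Icc 1 N, a i ^ 2)) := by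
          rw [← ENNReal.ofReal_mul hC.le, ← mul_assoc]
          exact ENNReal.ofReal_le_ofReal (le_mul_of_one_le_left (sqrt_nonneg _)
            ((inv_le_iff_one_le_mul₀ hc).1 (le_max_right _ _)))
      _ ≤ ENNReal.ofReal C * lorentzFNormE p q (rademacherSum N a) := by
          gcongr; exact h_lower N a
end
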